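/- arXiv:2003.10468 — 3 statements merged into one kernel-verified Lean document; each statement's English description precedes it below -/
import Mathlib

section
/- Let a > 0 and define p(x,y) = sinh(2y) sin(2x) / (2 sinh(2a) [2 + coth(2a)]) on ℝ². Then: (i) p is harmonic, i.e. ∂²p/∂x² + ∂²p/∂y² = 0 at every point; (ii) p(0,y) = 0, p(π,y) = 0 for 0 < y < a and p(x,0) = 0 for 0 < x < π; and (iii) setting P(x) = p(x,a), for every x ∈ (0,π) one has −P''(x) + ∂p/∂y(x,a) = sin(2x). -/
/-!
`p` is the separable mode `sinh (k y) sin (k x) / C` with `k = 2`. Differentiating twice in `x`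
multiplies it by `-k²` and twice in `y` by `k²`, so it is harmonic. On `y = a` the operator
`-∂ₓ² + ∂_y` sends it to `(k² sinh (k a) + k cosh (k a)) sin (k x) / C`, and the normalisation
`C = k sinh (k a) (k + coth (k a))` is exactly that coefficient.
-/

noncomputable def coth (t : ℝ) : ℝ := Real.cosh t / Real.sinh t

open Real

section SinhSinMode

variable (k C : ℝ)

theorem deriv_deriv_sinh_mul_sin_in_x (x y : ℝ) :
    deriv (fun x' => deriv (fun x'' => sinh (k * y) * sin (k * x'') / C) x') x
      = -(k ^ 2 * (sinh (k * y) * sin (k * x) / C)) := by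
  simp only [deriv_div_const, deriv_const_mul_field', deriv_comp_mul_left, Real.deriv_sin,
    Real.deriv_cos, smul_eq_mul]
  ring

theorem deriv_deriv_sinh_mul_sin_in_y (x y : ℝ) :
    deriv (fun y' => deriv (fun y'' => sinh (k * y'') * sin (k * x) / C) y') y
      = k ^ 2 * (sinh (k * y) * sin (k * x) / C) := by
  simp only [deriv_div_const, deriv_mul_const_field', deriv_const_mul_field', deriv_comp_mul_left,
    Real.deriv_sinh, Real.deriv_cosh, smul_eq_mul]
  ring

theorem laplacian_sinh_mul_sin_eq_zero (x y : ℝ) :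
    deriv (fun x' => deriv (fun x'' => sinh (k * y) * sin (k * x'') / C) x') x
      + deriv (fun y' => deriv (fun y'' => sinh (k * y'') * sin (k * x) / C) y') y = 0 := by
  rw [deriv_deriv_sinh_mul_sin_in_x, deriv_deriv_sinh_mul_sin_in_y]
  ring

theorem neg_deriv_deriv_add_deriv_sinh_mul_sin (a x : ℝ) :
    -deriv (deriv fun x' => sinh (k * a) * sin (k * x') / C) x
      + deriv (fun y' => sinh (k * y') * sin (k * x) / C) a
      = (k ^ 2 * sinh (k * a) + k * cosh (k * a)) * sin (k * x) / C := by
  rw [deriv_deriv_sinh_mul_sin_in_x]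
  simp only [deriv_div_const, deriv_mul_const_field', deriv_comp_mul_left, Real.deriv_sinh,
    smul_eq_mul]
  ring

end SinhSinMode

theorem mul_sinh_mul_add_coth (k t : ℝ) (ht : sinh t ≠ 0) :
    k * sinh t * (k + coth t) = k ^ 2 * sinh t + k * cosh t := by
  rw [coth]
  field_simp

theorem reynolds_sinh_mul_sin (k a x : ℝ) (hC : k * sinh (k * a) * (k + coth (k * a)) ≠ 0) :
    -deriv (deriv fun x' =>
        sinh (k * a) * sin (k * x') / (k * sinh (k * a) * (k + coth (k * a)))) x
      + deriv (fun y' => sinh (k * y') * sin (k * x) / (k * sinh (k * a) * (k + coth (k * a)))) a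
      = sin (k * x) := by
  have hsinh : sinh (k * a) ≠ 0 := fun h => hC (by rw [h, mul_zero, zero_mul])
  rw [neg_deriv_deriv_add_deriv_sinh_mul_sin, ← mul_sinh_mul_add_coth k _ hsinh,
    mul_div_cancel_left₀ _ hC]

/-- `p(x,y) = sinh(2y) sin(2x) / (2 sinh(2a)[2 + coth(2a)])` is harmonic,
vanishes on the sides `x = 0`, `x = π`, `y = 0`, and `P(x) = p(x,a)` satisfies the
linearized Reynolds boundary condition `−P''(x) + p_y(x,a) = sin(2x)` on `(0,π)`. -/
theorem porous_matrix_pressure (a : ℝ) (ha : 0 < a) (p : ℝ → ℝ → ℝ)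
    (hp : ∀ x y : ℝ, p x y = Real.sinh (2 * y) * Real.sin (2 * x)
      / (2 * Real.sinh (2 * a) * (2 + coth (2 * a)))) :
    (∀ x y : ℝ,
        deriv (fun x' => deriv (fun x'' => p x'' y) x') x
          + deriv (fun y' => deriv (fun y'' => p x y'') y') y = 0) ∧
      (∀ y : ℝ, 0 < y → y < a → p 0 y = 0) ∧
      (∀ y : ℝ, 0 < y → y < a → p Real.pi y = 0) ∧
      (∀ x : ℝ, 0 < x → x < Real.pi → p x 0 = 0) ∧
      (∀ x : ℝ, 0 < x → x < Real.pi →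
        -deriv (deriv (fun x' => p x' a)) x + deriv (fun y' => p x y') a
          = Real.sin (2 * x)) := by
  obtain rfl : p = fun x y => sinh (2 * y) * sin (2 * x) / (2 * sinh (2 * a) * (2 + coth (2 * a))) :=
    funext fun x => funext (hp x)
  have hC : 2 * sinh (2 * a) * (2 + coth (2 * a)) ≠ 0 := by
    have : 0 < sinh (2 * a) := sinh_pos_iff.2 (by positivity)
    unfold coth
    positivity
  refine ⟨laplacian_sinh_mul_sin_eq_zero 2 _, fun y _ _ => by simp, fun y _ _ => by simp,
    fun x _ _ => by simp, fun x _ _ => reynolds_sinh_mul_sin 2 a x hC⟩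
end

section
/- There exists a unique ξ̄ ∈ (0, L) such that F(ξ̄) = 0, and moreover L/2 < ξ̄ < L. -/
/-!
On `[0, L/2]` the integrand `z f z` is positive and on `[L/2, L]` it is negative, so `F` rises
strictly from `F 0 = 0` and then falls strictly. Pairing `z` with `L - z` and using
`f (L - z) = -f z` gives `F L = ∫₀^{L/2} (2z - L) f z < 0`, so by the intermediate value theorem
`F` has exactly one zero on `(0, L]`, and it lies in `(L/2, L)`.
-/

open intervalIntegral MeasureTheory Set

section Primitive

variable {g : ℝ → ℝ} {c a b : ℝ}

theorem strictMonoOn_integral_of_pos (hca : c ≤ a) (hg : ContinuousOn g (Icc c b))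
    (hpos : ∀ x ∈ Ioo a b, 0 < g x) :
    StrictMonoOn (fun x ↦ ∫ t in c..x, g t) (Icc a b) := by
  intro x hx y hy hxy
  have hint : ∀ u ∈ Icc c b, ∀ v ∈ Icc c b, IntervalIntegrable g volume u v :=
    fun u hu v hv ↦ (hg.mono (uIcc_subset_Icc hu hv)).intervalIntegrable
  have hxc : x ∈ Icc c b := ⟨hca.trans hx.1, hx.2⟩
  have hyc : y ∈ Icc c b := ⟨hca.trans hy.1, hy.2⟩
  have hcc : c ∈ Icc c b := ⟨le_rfl, hxc.2.trans' hxc.1⟩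
  show ∫ t in c..x, g t < ∫ t in c..y, g t
  rw [← integral_add_adjacent_intervals (hint c hcc x hxc) (hint x hxc y hyc)]
  refine lt_add_of_pos_right _ (intervalIntegral_pos_of_pos_on (hint x hxc y hyc) ?_ hxy)
  exact fun t ht ↦ hpos t ⟨hx.1.trans_lt ht.1, ht.2.trans_le hy.2⟩

theorem strictAntiOn_integral_of_neg (hca : c ≤ a) (hg : ContinuousOn g (Icc c b))
    (hneg : ∀ x ∈ Ioo a b, g x < 0) :
    StrictAntiOn (fun x ↦ ∫ t in c..x, g t) (Icc a b) := by
  intro x hx y hy hxy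
  have := strictMonoOn_integral_of_pos hca hg.neg (fun t ht ↦ neg_pos.2 (hneg t ht)) hx hy hxy
  simpa only [Pi.neg_apply, intervalIntegral.integral_neg, neg_lt_neg_iff] using this

end Primitive

theorem integral_eq_integral_add_reflect {g : ℝ → ℝ} {a b : ℝ}
    (hg : IntervalIntegrable g volume a b) :
    ∫ x in a..b, g x = ∫ x in a..(a + b) / 2, (g x + g (a + b - x)) := by
  have hmid : (a + b) / 2 ∈ uIcc a b := by
    rcases le_total a b with hab | hab
    · exact mem_uIcc.2 (Or.inl ⟨by linarith, by linarith⟩)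
    · exact mem_uIcc.2 (Or.inr ⟨by linarith, by linarith⟩)
  have hleft : IntervalIntegrable g volume a ((a + b) / 2) :=
    hg.mono_set (uIcc_subset_uIcc left_mem_uIcc hmid)
  have hright : IntervalIntegrable g volume ((a + b) / 2) b :=
    hg.mono_set (uIcc_subset_uIcc hmid right_mem_uIcc)
  have hreflect : IntervalIntegrable (fun x ↦ g (a + b - x)) volume a ((a + b) / 2) := by
    have := hright.symm.comp_sub_left (a + b)
    rwa [add_sub_cancel_right, show a + b - (a + b) / 2 = (a + b) / 2 by ring] at this
  rw [integral_add hleft hreflect, integral_comp_sub_left,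
    ← integral_add_adjacent_intervals hleft hright]
  ring_nf

theorem integral_mul_eq_of_antisymm {f : ℝ → ℝ} {L : ℝ} (hL : 0 ≤ L)
    (hf : ContinuousOn f (Icc 0 L)) (hanti : ∀ x ∈ Icc 0 L, f (L - x) = -f x) :
    ∫ z in 0..L, z * f z = ∫ z in 0..L / 2, (2 * z - L) * f z := by
  have hg : ContinuousOn (fun z ↦ z * f z) (Icc 0 L) := continuousOn_id.mul hf
  rw [integral_eq_integral_add_reflect (hg.intervalIntegrable_of_Icc hL), zero_add]
  refine intervalIntegral.integral_congr fun z hz ↦ ?_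
  rw [uIcc_of_le (by linarith)] at hz
  rw [hanti z ⟨hz.1, by linarith [hz.2]⟩]
  ring

theorem integral_mul_neg_of_antisymm {f : ℝ → ℝ} {L : ℝ} (hL : 0 < L)
    (hf : ContinuousOn f (Icc 0 L)) (hanti : ∀ x ∈ Icc 0 L, f (L - x) = -f x)
    (hpos : ∀ x ∈ Ioo 0 (L / 2), 0 < f x) : ∫ z in 0..L, z * f z < 0 := by
  rw [integral_mul_eq_of_antisymm hL.le hf hanti, ← neg_pos, ← intervalIntegral.integral_neg]
  have hcont : ContinuousOn (fun z ↦ -((2 * z - L) * f z)) (Icc 0 (L / 2)) :=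
    (((continuousOn_const.mul continuousOn_id).sub continuousOn_const).mul
      (hf.mono (Icc_subset_Icc_right (by linarith)))).neg
  refine intervalIntegral_pos_of_pos_on (hcont.intervalIntegrable_of_Icc (by linarith))
    (fun z hz ↦ ?_) (by linarith)
  have := hpos z hz
  nlinarith [hz.2]

theorem exists_unique_zero_of_strictMonoOn_of_strictAntiOn {F : ℝ → ℝ} {a m b : ℝ}
    (ham : a < m) (hmb : m ≤ b) (hcont : ContinuousOn F (Icc m b))
    (hmono : StrictMonoOn F (Icc a m)) (hanti : StrictAntiOn F (Icc m b))
    (ha : F a = 0) (hb : F b < 0) :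
    ∃ ξ ∈ Ioo m b, F ξ = 0 ∧ ∀ ζ ∈ Ioc a b, F ζ = 0 → ζ = ξ := by
  have hpos : ∀ ζ ∈ Ioc a m, 0 < F ζ := fun ζ hζ ↦
    ha ▸ hmono ⟨le_rfl, ham.le⟩ ⟨hζ.1.le, hζ.2⟩ hζ.1
  obtain ⟨ξ, hξ, hξ0⟩ := intermediate_value_Ioo' hmb hcont ⟨hb, hpos m ⟨ham, le_rfl⟩⟩
  refine ⟨ξ, hξ, hξ0, fun ζ hζ hζ0 ↦ ?_⟩
  have hζm : m < ζ := not_le.1 fun h ↦ (hpos ζ ⟨hζ.1, h⟩).ne' hζ0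
  exact hanti.injOn ⟨hζm.le, hζ.2⟩ ⟨hξ.1.le, hξ.2.le⟩ (hζ0.trans hξ0.symm)

/-- for `f` continuous on `[0,L]`, positive on `[0,L/2)`, negative on
`(L/2,L]` and antisymmetric about `L/2`, the function `F(ξ) = ∫₀^ξ z f(z) dz` has a
unique zero `ξ̄` in `(0,L)`, and moreover `L/2 < ξ̄ < L`. -/
theorem unique_zero_of_F (L : ℝ) (hL : 0 < L) (f : ℝ → ℝ)
    (hf : ContinuousOn f (Set.Icc 0 L))
    (hpos : ∀ x, 0 ≤ x → x < L / 2 → 0 < f x)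
    (hneg : ∀ x, L / 2 < x → x ≤ L → f x < 0)
    (hanti : ∀ x ∈ Set.Icc (0 : ℝ) L, f (L - x) = -f x) :
    (∃! ξ : ℝ, ξ ∈ Set.Ioo (0 : ℝ) L ∧ (∫ z in (0:ℝ)..ξ, z * f z) = 0) ∧
      (∀ ξ : ℝ, ξ ∈ Set.Ioo (0 : ℝ) L → (∫ z in (0:ℝ)..ξ, z * f z) = 0 →
        L / 2 < ξ ∧ ξ < L) := by
  have hg : ContinuousOn (fun z ↦ z * f z) (Icc 0 L) := continuousOn_id.mul hf
  have hF : ContinuousOn (fun ξ ↦ ∫ z in 0..ξ, z * f z) (Icc (L / 2) L) := by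
    have := continuousOn_primitive_interval (μ := volume) (a := 0) (b := L)
      (uIcc_of_le hL.le ▸ hg.integrableOn_Icc)
    exact (uIcc_of_le hL.le ▸ this).mono (Icc_subset_Icc_left (by linarith))
  have hrise : StrictMonoOn (fun ξ ↦ ∫ z in 0..ξ, z * f z) (Icc 0 (L / 2)) :=
    strictMonoOn_integral_of_pos le_rfl (hg.mono (Icc_subset_Icc_right (by linarith)))
      fun x hx ↦ mul_pos hx.1 (hpos x hx.1.le hx.2)
  have hfall : StrictAntiOn (fun ξ ↦ ∫ z in 0..ξ, z * f z) (Icc (L / 2) L) :=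
    strictAntiOn_integral_of_neg (by linarith) hg
      fun x hx ↦ mul_neg_of_pos_of_neg (by linarith [hx.1]) (hneg x hx.1 hx.2.le)
  obtain ⟨ξ, hξ, hξ0, huniq⟩ := exists_unique_zero_of_strictMonoOn_of_strictAntiOn
    (by linarith) (by linarith) hF hrise hfall integral_same
    (integral_mul_neg_of_antisymm hL hf hanti fun x hx ↦ hpos x hx.1.le hx.2)
  have hzero : ∀ ζ ∈ Ioo 0 L, ∫ z in 0..ζ, z * f z = 0 → ζ = ξ :=
    fun ζ hζ ↦ huniq ζ (Ioo_subset_Ioc_self hζ)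
  exact ⟨⟨ξ, ⟨⟨by linarith [hξ.1], hξ.2⟩, hξ0⟩, fun ζ hζ ↦ hzero ζ hζ.1 hζ.2⟩,
    fun ζ hζ hζ0 ↦ hzero ζ hζ hζ0 ▸ hξ⟩
end

section
/- The function u(x) = x ∫₀^{ξ̄} f(t) dt − ∫₀^x (x − z) f(z) dz satisfies u(x) > 0 for every x ∈ (0, ξ̄). -/
/-!
With `F(ξ) = 0`, the function `u` equals `x ↦ ∫_x^ξ (x - z) f(z) dz`, whose integrand is positive
once `x ≥ L/2`, since there both factors are negative. On `[0, L/2]` the function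
`x ↦ ∫_0^x (x - z) f(z) dz` is convex (its second derivative is `f ≥ 0`) and vanishes at `0`,
so `u` lies above the chord from `(0, 0)` to `(L/2, u(L/2))`, and `u(L/2) > 0`.
-/

open intervalIntegral Set

variable {f : ℝ → ℝ}

theorem ContinuousOn.intervalIntegrable_id_mul {a b : ℝ} (hf : ContinuousOn f (uIcc a b)) :
    IntervalIntegrable (fun z => z * f z) MeasureTheory.volume a b :=
  ((continuousOn_id' _).mul hf).intervalIntegrable

theorem integral_sub_mul_eq {a b : ℝ} (hf : ContinuousOn f (uIcc a b)) (k : ℝ) :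
    ∫ z in a..b, (k - z) * f z = k * (∫ z in a..b, f z) - ∫ z in a..b, z * f z := by
  simp only [sub_mul]
  rw [integral_sub (hf.intervalIntegrable.const_mul k) hf.intervalIntegrable_id_mul,
    integral_const_mul]

theorem mul_integral_sub_integral_sub_mul_eq {a b x : ℝ} (hf : ContinuousOn f (uIcc a b))
    (hx : x ∈ uIcc a b) :
    x * (∫ t in a..b, f t) - ∫ z in a..x, (x - z) * f z
      = (∫ z in x..b, (x - z) * f z) + ∫ z in a..b, z * f z := by
  have hf₁ : ContinuousOn f (uIcc a x) := hf.mono (uIcc_subset_uIcc_left hx)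
  have hf₂ : ContinuousOn f (uIcc x b) := hf.mono (uIcc_subset_uIcc_right hx)
  rw [integral_sub_mul_eq hf₁, integral_sub_mul_eq hf₂,
    ← integral_add_adjacent_intervals hf₁.intervalIntegrable hf₂.intervalIntegrable,
    ← integral_add_adjacent_intervals hf₁.intervalIntegrable_id_mul hf₂.intervalIntegrable_id_mul]
  ring

theorem integral_sub_mul_pos_of_neg {x b : ℝ} (hxb : x < b) (hf : ContinuousOn f (Icc x b))
    (hneg : ∀ z ∈ Ioo x b, f z < 0) :
    0 < ∫ z in x..b, (x - z) * f z := by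
  rw [← uIcc_of_le hxb.le] at hf
  refine intervalIntegral_pos_of_pos_on ?_ (fun z hz => ?_) hxb
  · exact ((continuousOn_const.sub continuousOn_id).mul hf).intervalIntegrable
  · exact mul_pos_of_neg_of_neg (by linarith [hz.1]) (hneg z hz)

theorem mul_integral_sub_mul_le {x c : ℝ} (hx : 0 ≤ x) (hxc : x < c)
    (hf : ContinuousOn f (Icc 0 c)) (hnonneg : ∀ z ∈ Ico 0 c, 0 ≤ f z) :
    c * ∫ z in 0..x, (x - z) * f z ≤ x * ∫ z in 0..c, (c - z) * f z := by
  rw [← uIcc_of_le (hx.trans hxc.le)] at hf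
  have hxmem : x ∈ uIcc 0 c := by rw [uIcc_of_le (hx.trans hxc.le)]; exact ⟨hx, hxc.le⟩
  have hf₁ : ContinuousOn f (uIcc 0 x) := hf.mono (uIcc_subset_uIcc_left hxmem)
  have hf₂ : ContinuousOn f (uIcc x c) := hf.mono (uIcc_subset_uIcc_right hxmem)
  have hmoment : 0 ≤ ∫ z in 0..x, z * f z :=
    integral_nonneg hx fun z hz => mul_nonneg hz.1 (hnonneg z ⟨hz.1, hz.2.trans_lt hxc⟩)
  have htail : 0 ≤ ∫ z in x..c, (c - z) * f z := by
    refine integral_nonneg hxc.le fun z hz => ?_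
    rcases hz.2.lt_or_eq with hzc | rfl
    · exact mul_nonneg (by linarith) (hnonneg z ⟨hx.trans hz.1, hzc⟩)
    · simp
  have hgap : x * (∫ z in 0..c, (c - z) * f z) - c * ∫ z in 0..x, (x - z) * f z
      = (c - x) * (∫ z in 0..x, z * f z) + x * ∫ z in x..c, (c - z) * f z := by
    rw [integral_sub_mul_eq hf₁, integral_sub_mul_eq hf₂, integral_sub_mul_eq hf,
      ← integral_add_adjacent_intervals hf₁.intervalIntegrable hf₂.intervalIntegrable,
      ← integral_add_adjacent_intervals hf₁.intervalIntegrable_id_mul hf₂.intervalIntegrable_id_mul]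
    ring
  nlinarith [mul_nonneg (sub_nonneg.2 hxc.le) hmoment, mul_nonneg hx htail]

theorem solution_positive_general (L : ℝ) (f : ℝ → ℝ)
    (hf : ContinuousOn f (Set.Icc 0 L))
    (hpos : ∀ x, 0 ≤ x → x < L / 2 → 0 < f x)
    (hneg : ∀ x, L / 2 < x → x ≤ L → f x < 0)
    (ξ : ℝ) (hξ : ξ ∈ Set.Ioo (L / 2) L)
    (hF : (∫ z in (0:ℝ)..ξ, z * f z) = 0)
    (u : ℝ → ℝ)
    (hu : ∀ x : ℝ, u x = x * (∫ t in (0:ℝ)..ξ, f t) - ∫ z in (0:ℝ)..x, (x - z) * f z) :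
    ∀ x : ℝ, 0 < x → x < ξ → 0 < u x := by
  obtain ⟨hcξ, hξL⟩ := hξ
  have hfξ : ContinuousOn f (Icc 0 ξ) := hf.mono (Icc_subset_Icc_right hξL.le)
  have hright : ∀ x, L / 2 ≤ x → x < ξ → 0 < u x := by
    intro x hcx hxξ
    have hx : x ∈ uIcc 0 ξ := by rw [uIcc_of_le (by linarith)]; exact ⟨by linarith, hxξ.le⟩
    rw [hu, mul_integral_sub_integral_sub_mul_eq (by rwa [uIcc_of_le (by linarith)]) hx, hF,
      add_zero]
    exact integral_sub_mul_pos_of_neg hxξ (hfξ.mono (Icc_subset_Icc_left (by linarith)))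
      fun z hz => hneg z (hcx.trans_lt hz.1) (by linarith [hz.2])
  intro x hx hxξ
  rcases le_or_gt (L / 2) x with hcx | hxc
  · exact hright x hcx hxξ
  · have hconvex := mul_integral_sub_mul_le hx.le hxc (hfξ.mono (Icc_subset_Icc_right hcξ.le))
      fun z hz => (hpos z hz.1 hz.2).le
    have hchord : x * u (L / 2) ≤ L / 2 * u x := by
      rw [hu, hu]; linear_combination hconvex
    have hmid := mul_pos hx (hright (L / 2) le_rfl hcξ)
    exact pos_of_mul_pos_right (hmid.trans_le hchord) (by linarith)

/-- the function `u(x) = x ∫₀^{ξ̄} f − ∫₀^x (x−z) f(z) dz` is positive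
on `(0, ξ̄)`. -/
theorem solution_positive (L : ℝ) (hL : 0 < L) (f : ℝ → ℝ)
    (hf : ContinuousOn f (Set.Icc 0 L))
    (hpos : ∀ x, 0 ≤ x → x < L / 2 → 0 < f x)
    (hneg : ∀ x, L / 2 < x → x ≤ L → f x < 0)
    (hanti : ∀ x ∈ Set.Icc (0 : ℝ) L, f (L - x) = -f x)
    (ξ : ℝ) (hξ : ξ ∈ Set.Ioo (L / 2) L)
    (hF : (∫ z in (0:ℝ)..ξ, z * f z) = 0)
    (u : ℝ → ℝ)
    (hu : ∀ x : ℝ, u x = x * (∫ t in (0:ℝ)..ξ, f t) - ∫ z in (0:ℝ)..x, (x - z) * f z) :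
    ∀ x : ℝ, 0 < x → x < ξ → 0 < u x :=
  solution_positive_general L f hf hpos hneg ξ hξ hF u hu
end
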